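/- Deterministic one-step inequality for projected ascent with an arbitrary gradient estimate: fix x ∈ ℝⁿ and y ∈ Y with ‖y − y*(x)‖ ≤ 1/(8L_{x,1}) such that, whenever ∇_y L(x,y) ≠ 0, the point y + ∇_y L(x,y)/(L_{y,0} + L_{y,1}‖∇_y L(x,y)‖) belongs to Y (this holds automatically when Y = ℝᵐ). For any vector g ∈ ℝᵐ, any 0 < η ≤ 1/(2L_y), and y⁺ := proj_Y(y + ηg), one has ‖y*(x) − y⁺‖² ≤ (1 − μη)‖y*(x) − y‖² − 2η⟨g − ∇_y L(x,y), y*(x) − y⟩ + 2η²‖g − ∇_y L(x,y)‖². -/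

import Mathlib

open scoped RealInnerProductSpace

section AuxLemmas

variable {E : Type*} [NormedAddCommGroup E] [InnerProductSpace ℝ E] [CompleteSpace E]



lemma line_hasDerivAt (f : E → ℝ) (a v : E) (t : ℝ) (G : E)
    (h : HasGradientAt f G (a + t • v)) :
    HasDerivAt (fun s : ℝ => f (a + s • v)) ⟪G, v⟫ t := by
  have hline : HasDerivAt (fun s : ℝ => a + s • v) v t := by
    simpa using ((hasDerivAt_id t).smul_const v).const_add a
  have hf := (hasGradientAt_iff_hasFDerivAt.1 h).comp_hasDerivAt t hline
  simp [InnerProductSpace.toDual_apply_apply] at hf; exact hf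

lemma strongConcave_grad {μ : ℝ} {f : E → ℝ}
    (hf : StrongConcaveOn Set.univ μ f) {y G : E} (hG : HasGradientAt f G y) (z : E) :
    f z - f y + μ/2 * ‖z - y‖^2 ≤ ⟪G, z - y⟫ := by
  have hd : HasDerivAt (fun s : ℝ => f (y + s • (z - y))) ⟪G, z - y⟫ 0 := by
    apply line_hasDerivAt
    simpa using hG
  have hslope := hasDerivAt_iff_tendsto_slope.1 hd
  have hslope' : Filter.Tendsto (slope (fun s : ℝ => f (y + s • (z - y))) 0)
      (nhdsWithin 0 (Set.Ioi 0)) (nhds ⟪G, z - y⟫) :=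
    hslope.mono_left (nhdsWithin_mono 0 (fun t ht => ne_of_gt ht))
  have hlhs : Filter.Tendsto (fun t : ℝ => f z - f y + (1 - t) * (μ/2 * ‖z - y‖^2))
      (nhdsWithin 0 (Set.Ioi 0)) (nhds (f z - f y + μ/2 * ‖z - y‖^2)) := by
    have : Filter.Tendsto (fun t : ℝ => f z - f y + (1 - t) * (μ/2 * ‖z - y‖^2))
        (nhds 0) (nhds (f z - f y + (1 - 0) * (μ/2 * ‖z - y‖^2))) := by
      apply Filter.Tendsto.add tendsto_const_nhds
      exact (((tendsto_const_nhds).sub Filter.tendsto_id).mul tendsto_const_nhds)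
    simpa using this.mono_left nhdsWithin_le_nhds
  refine le_of_tendsto_of_tendsto hlhs hslope' ?_
  filter_upwards [Ioc_mem_nhdsGT_of_mem (Set.mem_Ico.2 ⟨le_refl (0:ℝ), zero_lt_one⟩)] with t ht
  rcases ht with ⟨ht0, ht1⟩
  have hcomb := hf.2 (Set.mem_univ z) (Set.mem_univ y) ht0.le (by linarith : (0:ℝ) ≤ 1 - t)
    (by ring)
  have hpt : t • z + (1 - t) • y = y + t • (z - y) := by module
  rw [hpt] at hcomb
  rw [slope_def_field]
  simp only [smul_eq_mul] at hcomb
  have : (f (y + t • (z - y)) - f (y + (0:ℝ) • (z - y))) / (t - 0) ≥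
      f z - f y + (1 - t) * (μ/2 * ‖z - y‖^2) := by
    rw [ge_iff_le, le_div_iff₀ (by linarith : (0:ℝ) < t - 0)]
    simp only [zero_smul, add_zero]
    nlinarith [hcomb]
  simpa [slope_def_field, div_eq_mul_inv] using this



lemma max_grad_le {f : E → ℝ} {Y : Set E} (hconv : Convex ℝ Y) {ys : E} (hys : ys ∈ Y)
    (hmax : ∀ z ∈ Y, f z ≤ f ys) {G : E} (hG : HasGradientAt f G ys) {w : E} (hw : w ∈ Y) :
    ⟪G, w - ys⟫ ≤ 0 := by
  have hd : HasDerivAt (fun s : ℝ => f (ys + s • (w - ys))) ⟪G, w - ys⟫ 0 := by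
    have hline : HasDerivAt (fun s : ℝ => ys + s • (w - ys)) (w - ys) 0 := by
      simpa using ((hasDerivAt_id (0:ℝ)).smul_const (w - ys)).const_add ys
    have hG' : HasGradientAt f G (ys + (0:ℝ) • (w - ys)) := by simpa using hG
    have hf := (hasGradientAt_iff_hasFDerivAt.1 hG').comp_hasDerivAt 0 hline
    simp [InnerProductSpace.toDual_apply_apply] at hf; exact hf
  have hslope : Filter.Tendsto (slope (fun s : ℝ => f (ys + s • (w - ys))) 0)
      (nhdsWithin 0 (Set.Ioi 0)) (nhds ⟪G, w - ys⟫) :=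
    (hasDerivAt_iff_tendsto_slope.1 hd).mono_left
      (nhdsWithin_mono 0 (fun t ht => ne_of_gt ht))
  refine le_of_tendsto hslope ?_
  filter_upwards [Ioc_mem_nhdsGT_of_mem (Set.mem_Ico.2 ⟨le_refl (0:ℝ), zero_lt_one⟩)] with t ht
  rcases ht with ⟨ht0, ht1⟩
  have hpt : ys + t • (w - ys) = (1 - t) • ys + t • w := by module
  have hmem : ys + t • (w - ys) ∈ Y := by
    rw [hpt]; exact hconv hys hw (by linarith) ht0.le (by ring)
  have hle : f (ys + t • (w - ys)) ≤ f ys := hmax _ hmem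
  rw [slope_def_field]
  simp only [zero_smul, add_zero, sub_zero]
  apply div_nonpos_of_nonpos_of_nonneg _ ht0.le
  simpa using sub_nonpos.2 hle

lemma ascent_lemma (f : E → ℝ) (gf : E → E) (hgf : ∀ z, HasGradientAt f (gf z) z)
    (y d : E) (l : ℝ) (hl : 0 ≤ l)
    (hLip : ∀ t ∈ Set.Icc (0:ℝ) 1, ‖gf (y + t • d) - gf y‖ ≤ l * t * ‖d‖) :
    f y + ⟪gf y, d⟫ - l/2 * ‖d‖^2 ≤ f (y + d) := by
  set ψ : ℝ → ℝ := fun t => f (y + t • d) - t * ⟪gf y, d⟫ + l * ‖d‖^2/2 * t^2 with hψ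
  have hder : ∀ t : ℝ, HasDerivAt ψ (⟪gf (y + t • d), d⟫ - ⟪gf y, d⟫ + l * ‖d‖^2 * t) t := by
    intro t
    have h1 : HasDerivAt (fun s : ℝ => f (y + s • d)) ⟪gf (y + t • d), d⟫ t := by
      have hline : HasDerivAt (fun s : ℝ => y + s • d) d t := by
        simpa using ((hasDerivAt_id t).smul_const d).const_add y
      have hf := (hasGradientAt_iff_hasFDerivAt.1 (hgf (y + t • d))).comp_hasDerivAt t hline
      simp [InnerProductSpace.toDual_apply_apply] at hf; exact hf
    have h2 : HasDerivAt (fun s : ℝ => s * ⟪gf y, d⟫) ⟪gf y, d⟫ t := by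
      simpa using (hasDerivAt_id t).mul_const ⟪gf y, d⟫
    have h3 : HasDerivAt (fun s : ℝ => l * ‖d‖^2/2 * s^2) (l * ‖d‖^2 * t) t := by
      have := ((hasDerivAt_pow 2 t).const_mul (l * ‖d‖^2/2))
      simpa using this.congr_deriv (by ring)
    exact (h1.sub h2).add h3
  have hmono : MonotoneOn ψ (Set.Icc (0:ℝ) 1) := by
    apply monotoneOn_of_deriv_nonneg (convex_Icc 0 1)
    · exact fun t _ => ((hder t).continuousAt).continuousWithinAt
    · intro t _
      exact ((hder t).differentiableAt).differentiableWithinAt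
    · intro t ht
      rw [interior_Icc] at ht
      rw [(hder t).deriv]
      have hinner : ⟪gf (y + t • d), d⟫ - ⟪gf y, d⟫ = ⟪gf (y + t • d) - gf y, d⟫ := by
        rw [inner_sub_left]
      have hcs : |⟪gf (y + t • d) - gf y, d⟫| ≤ ‖gf (y + t • d) - gf y‖ * ‖d‖ :=
        abs_real_inner_le_norm _ _
      have hLip' := hLip t ⟨ht.1.le, ht.2.le⟩
      have hd0 : (0:ℝ) ≤ ‖d‖ := norm_nonneg d
      rw [hinner]
      nlinarith [abs_le.1 hcs, ht.1]
  have := hmono (Set.mem_Icc.2 ⟨le_refl 0, zero_le_one⟩) (Set.mem_Icc.2 ⟨zero_le_one, le_refl 1⟩)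
    zero_le_one
  simp only [hψ, zero_smul, add_zero, one_smul, zero_mul, mul_zero, zero_pow, one_pow, mul_one,
    sub_zero] at this
  nlinarith [this]

lemma chaining (F : E → E) (K C : ℝ) (hK : 0 < K) (hC : 0 ≤ C)
    (h : ∀ a b : E, ‖a - b‖ ≤ K → ‖F a - F b‖ ≤ C * ‖a - b‖) :
    ∀ a b : E, ‖F a - F b‖ ≤ C * ‖a - b‖ := by
  have H : ∀ N : ℕ, ∀ a b : E, ‖a - b‖ ≤ N * K → ‖F a - F b‖ ≤ C * ‖a - b‖ := by
    intro N
    induction N with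
    | zero =>
      intro a b hab
      simp only [Nat.cast_zero, zero_mul] at hab
      have : a = b := by
        have : ‖a - b‖ = 0 := le_antisymm hab (norm_nonneg _)
        rwa [norm_sub_eq_zero_iff] at this
      simp [this]
    | succ N ih =>
      intro a b hab
      set c : E := a + ((N : ℝ)/(N+1)) • (b - a) with hc
      have hca : c - a = ((N : ℝ)/(N+1)) • (b - a) := by rw [hc]; abel
      have hbc : b - c = ((1 : ℝ)/(N+1)) • (b - a) := by
        rw [hc]; rw [smul_sub, smul_sub]; 
        have : ((1:ℝ)/(N+1)) = 1 - (N:ℝ)/(N+1) := by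
          field_simp
          ring
        rw [this]; module
      have hN1 : (0:ℝ) < (N:ℝ) + 1 := by positivity
      have hnca : ‖a - c‖ ≤ (N:ℝ) * K := by
        rw [← neg_sub, norm_neg, hca, norm_smul]
        rw [Real.norm_eq_abs, abs_of_nonneg (by positivity)]
        rw [norm_sub_rev]
        calc (N:ℝ)/(N+1) * ‖a - b‖ ≤ (N:ℝ)/(N+1) * ((N+1) * K) := by
              apply mul_le_mul_of_nonneg_left _ (by positivity)
              simpa [Nat.cast_succ] using hab
          _ = (N:ℝ) * K := by field_simp
      have hncb : ‖c - b‖ ≤ K := by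
        rw [← neg_sub, norm_neg, hbc, norm_smul]
        rw [Real.norm_eq_abs, abs_of_nonneg (by positivity)]
        rw [norm_sub_rev]
        calc (1:ℝ)/(N+1) * ‖a - b‖ ≤ (1:ℝ)/(N+1) * ((N+1) * K) := by
              apply mul_le_mul_of_nonneg_left _ (by positivity)
              simpa [Nat.cast_succ] using hab
          _ = K := by field_simp
      have h1 := ih a c hnca
      have h2 := h c b hncb
      calc ‖F a - F b‖ ≤ ‖F a - F c‖ + ‖F c - F b‖ := by
            simpa using norm_sub_le_norm_sub_add_norm_sub (F a) (F c) (F b)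
        _ ≤ C * ‖a - c‖ + C * ‖c - b‖ := add_le_add h1 h2
        _ = C * (‖a - c‖ + ‖c - b‖) := by ring
        _ = C * ‖a - b‖ := by
            congr 1
            rw [← neg_sub c a, norm_neg, hca, ← neg_sub b c, norm_neg, hbc, ← neg_sub b a,
              norm_neg]
            rw [norm_smul, norm_smul, Real.norm_eq_abs, Real.norm_eq_abs,
              abs_of_nonneg (by positivity : (0:ℝ) ≤ (N:ℝ)/(N+1)),
              abs_of_nonneg (by positivity : (0:ℝ) ≤ (1:ℝ)/(N+1))]
            field_simp
  intro a b
  obtain ⟨N, hN⟩ := exists_nat_ge (‖a - b‖ / K)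
  exact H N a b (by rw [div_le_iff₀ hK] at hN; linarith)

lemma proj_obtuse {Y : Set E} (hconv : Convex ℝ Y) (projY : E → E)
    (hproj : ∀ z, projY z ∈ Y ∧ ∀ w ∈ Y, ‖z - projY z‖ ≤ ‖z - w‖) (p : E) {w : E} (hw : w ∈ Y) :
    ⟪p - projY p, w - projY p⟫ ≤ 0 := by
  set q := projY p with hq
  set a := ⟪p - q, w - q⟫ with ha
  set C := ‖w - q‖^2 with hC
  have hC0 : 0 ≤ C := by positivity
  have key : ∀ t : ℝ, 0 < t → t ≤ 1 → 2 * a ≤ t * C := by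
    intro t ht0 ht1
    have hmem : q + t • (w - q) ∈ Y := by
      have hpt : q + t • (w - q) = (1 - t) • q + t • w := by module
      rw [hpt]
      exact hconv (hproj p).1 hw (by linarith) ht0.le (by ring)
    have hle := (hproj p).2 _ hmem
    have hsq : ‖p - q‖^2 ≤ ‖p - (q + t • (w - q))‖^2 := by
      apply sq_le_sq' _ hle
      have := norm_nonneg (p - (q + t • (w - q)))
      linarith [norm_nonneg (p - q)]
    have hexp : p - (q + t • (w - q)) = (p - q) - t • (w - q) := by abel
    rw [hexp] at hsq
    have hrhs : ‖(p - q) - t • (w - q)‖^2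
        = ‖p - q‖^2 - 2 * ⟪p - q, t • (w - q)⟫ + ‖t • (w - q)‖^2 := norm_sub_sq_real _ _
    rw [hrhs, real_inner_smul_right, norm_smul, Real.norm_eq_abs, abs_of_pos ht0] at hsq
    have h2 : 2 * t * a ≤ t^2 * C := by rw [ha, hC]; nlinarith [hsq]
    nlinarith [h2, ht0]
  by_contra hpos
  push_neg at hpos
  by_cases hC0' : C ≤ 0
  · have := key 1 zero_lt_one le_rfl
    nlinarith
  · push_neg at hC0'
    have ht := key (min 1 (a / C)) (lt_min zero_lt_one (div_pos hpos hC0')) (min_le_left _ _)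
    have : min 1 (a / C) * C ≤ (a / C) * C := by
      apply mul_le_mul_of_nonneg_right (min_le_right _ _) hC0
    rw [div_mul_cancel₀ _ (ne_of_gt hC0')] at this
    linarith

end AuxLemmas

set_option maxHeartbeats 2000000 in
/-- Deterministic one-step inequality for projected ascent with an arbitrary gradient estimate. -/
theorem projected_ascent_one_step_deterministic
    {n m : ℕ} (hn : 0 < n) (hm : 0 < m)
    (L : EuclideanSpace ℝ (Fin n) → EuclideanSpace ℝ (Fin m) → ℝ)
    (hLdiff : Differentiable ℝ
      (fun p : (EuclideanSpace ℝ (Fin n)) × (EuclideanSpace ℝ (Fin m)) => L p.1 p.2))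
    (gx : EuclideanSpace ℝ (Fin n) → EuclideanSpace ℝ (Fin m) → EuclideanSpace ℝ (Fin n))
    (gy : EuclideanSpace ℝ (Fin n) → EuclideanSpace ℝ (Fin m) → EuclideanSpace ℝ (Fin m))
    (hgx : ∀ x y, HasGradientAt (fun x' => L x' y) (gx x y) x)
    (hgy : ∀ x y, HasGradientAt (fun y' => L x y') (gy x y) y)
    (μ : ℝ) (hμ : 0 < μ)
    (Y : Set (EuclideanSpace ℝ (Fin m)))
    (hY : Y = Set.univ ∨ (Y.Nonempty ∧ IsCompact Y ∧ Convex ℝ Y))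
    (hconc : ∀ x, StrongConcaveOn Set.univ μ (L x))
    (Lx0 Lx1 Ly0 Ly1 : ℝ)
    (hLx0 : 0 ≤ Lx0) (hLx1 : 0 ≤ Lx1) (hLy0 : 0 ≤ Ly0) (hLy1 : 0 ≤ Ly1)
    (hsx : ∀ x y x' y', Real.sqrt (‖x - x'‖^2 + ‖y - y'‖^2) ≤ 1/Lx1 + 1/Ly1 →
      ‖gx x y - gx x' y'‖ ≤ (Lx0 + Lx1 * ‖gx x y‖) * Real.sqrt (‖x - x'‖^2 + ‖y - y'‖^2))
    (hsy : ∀ x y x' y', Real.sqrt (‖x - x'‖^2 + ‖y - y'‖^2) ≤ 1/Lx1 + 1/Ly1 →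
      ‖gy x y - gy x' y'‖ ≤ (Ly0 + Ly1 * ‖gy x y‖) * Real.sqrt (‖x - x'‖^2 + ‖y - y'‖^2))
    (ystar : EuclideanSpace ℝ (Fin n) → EuclideanSpace ℝ (Fin m))
    (hmem : ∀ x, ystar x ∈ Y)
    (hmax : ∀ x, ∀ y ∈ Y, L x y ≤ L x (ystar x))
    (huniq : ∀ x, ∀ y ∈ Y, (∀ z ∈ Y, L x z ≤ L x y) → y = ystar x)
    (B : ℝ) (hB : 0 ≤ B)
    (hgradB : ∀ x, ‖gy x (ystar x)‖ ≤ B)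
    (projY : EuclideanSpace ℝ (Fin m) → EuclideanSpace ℝ (Fin m))
    (hproj : ∀ z, projY z ∈ Y ∧ ∀ w ∈ Y, ‖z - projY z‖ ≤ ‖z - w‖)
    (Ly : ℝ) (hLyDef : Ly = Ly0 + Ly1 * ((Ly0 + Ly1 * B)/(8 * Lx1) + B))
    (x : EuclideanSpace ℝ (Fin n)) (y : EuclideanSpace ℝ (Fin m)) (hyY : y ∈ Y)
    (hnear : ‖y - ystar x‖ ≤ 1/(8 * Lx1))
    (hstep : gy x y ≠ 0 → y + (Ly0 + Ly1 * ‖gy x y‖)⁻¹ • gy x y ∈ Y) :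
    ∀ g : EuclideanSpace ℝ (Fin m), ∀ η : ℝ, 0 < η → η ≤ 1/(2 * Ly) →
      ‖ystar x - projY (y + η • g)‖^2 ≤
        (1 - μ * η) * ‖ystar x - y‖^2
          - 2 * η * ⟪g - gy x y, ystar x - y⟫
          + 2 * η^2 * ‖g - gy x y‖^2 := by
  intro g η hη hηLy
  have hYconv : Convex ℝ Y := by
    rcases hY with h | h
    · rw [h]; exact convex_univ
    · exact h.2.2
  set G := gy x y with hG
  clear_value G
  -- strong concavity gradient inequality
  have hI5 : L x (ystar x) - L x y + μ/2 * ‖ystar x - y‖^2 ≤ ⟪G, ystar x - y⟫ := by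
    rw [hG]
    exact strongConcave_grad (hconc x) (hgy x y) (ystar x)
  -- key ascent inequality
  have hkey : η * ‖G‖^2 ≤ L x (ystar x) - L x y := by
    by_cases hG0 : G = 0
    · rw [hG0]
      simp only [norm_zero, ne_eq, zero_pow, mul_zero, OfNat.ofNat_ne_zero,
        not_false_eq_true]
      linarith [hmax x y hyY]
    · have hGpos : 0 < ‖G‖ := norm_pos_iff.2 hG0
      set l := Ly0 + Ly1 * ‖G‖ with hl
      clear_value l
      have hl0 : 0 ≤ l := by rw [hl]; positivity
      have hlpos : 0 < l := by
        rcases lt_or_eq_of_le hl0 with h | h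
        · exact h
        · exfalso
          have h1 : 0 ≤ Ly1 * ‖G‖ := by positivity
          have hLy00 : Ly0 = 0 := by rw [hl] at h; linarith
          have hLy10 : Ly1 = 0 := by
            rcases (mul_eq_zero.1 (by rw [hl] at h; linarith : Ly1 * ‖G‖ = 0)) with h' | h'
            · exact h'
            · exact absurd h' (ne_of_gt hGpos)
          rw [hLyDef, hLy00, hLy10] at hηLy
          simp at hηLy
          linarith
      have hyY' := hstep hG0
      set d := l⁻¹ • G with hd
      clear_value d
      have hnd : ‖d‖ = l⁻¹ * ‖G‖ := by
        rw [hd, norm_smul, Real.norm_eq_abs, abs_of_pos (inv_pos.2 hlpos)]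
      -- bound on the gradient norm
      have hGM : ‖G‖ ≤ (Ly0 + Ly1 * B)/(8 * Lx1) + B := by
        by_cases hLx1' : Lx1 = 0
        · have hyys : y = ystar x := by
            have h0 : ‖y - ystar x‖ ≤ 0 := by simpa [hLx1'] using hnear
            have h1 := le_antisymm h0 (norm_nonneg _)
            rwa [norm_sub_eq_zero_iff] at h1
          rw [hLx1']
          simp only [mul_zero, div_zero, zero_add]
          calc ‖G‖ = ‖gy x (ystar x)‖ := by rw [hG, hyys]
            _ ≤ B := hgradB x
        · have hLx1pos : 0 < Lx1 := lt_of_le_of_ne hLx1 (Ne.symm hLx1')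
          have hsqrt : Real.sqrt (‖x - x‖^2 + ‖ystar x - y‖^2) = ‖ystar x - y‖ := by
            rw [sub_self, norm_zero]
            have h0 : (0:ℝ)^2 + ‖ystar x - y‖^2 = ‖ystar x - y‖^2 := by ring
            rw [h0, Real.sqrt_sq (norm_nonneg _)]
          have hrevn : ‖ystar x - y‖ = ‖y - ystar x‖ := norm_sub_rev _ _
          have hcond : Real.sqrt (‖x - x‖^2 + ‖ystar x - y‖^2) ≤ 1/Lx1 + 1/Ly1 := by
            rw [hsqrt, hrevn]
            have h8 : 1/(8*Lx1) ≤ 1/Lx1 := by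
              apply one_div_le_one_div_of_le hLx1pos
              linarith
            have h9 : 0 ≤ 1/Ly1 := by positivity
            linarith [hnear]
          have happ := hsy x (ystar x) x y hcond
          rw [hsqrt] at happ
          rw [← hG] at happ
          have hb1 : ‖gy x (ystar x) - G‖ ≤ (Ly0 + Ly1 * B) * (1/(8*Lx1)) := by
            calc ‖gy x (ystar x) - G‖ ≤ (Ly0 + Ly1 * ‖gy x (ystar x)‖) * ‖ystar x - y‖ := happ
              _ ≤ (Ly0 + Ly1 * B) * (1/(8*Lx1)) := by
                  apply mul_le_mul
                  · have := mul_le_mul_of_nonneg_left (hgradB x) hLy1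
                    linarith
                  · rw [hrevn]; exact hnear
                  · exact norm_nonneg _
                  · positivity
          have htri : ‖G‖ - ‖gy x (ystar x)‖ ≤ ‖G - gy x (ystar x)‖ :=
            norm_sub_norm_le _ _
          rw [norm_sub_rev] at htri
          have heq : (Ly0 + Ly1 * B) * (1/(8*Lx1)) = (Ly0 + Ly1 * B)/(8 * Lx1) := by
            ring
          linarith [hgradB x, hb1, htri, heq.le, heq.ge]
      have hlLy : l ≤ Ly := by
        rw [hLyDef, hl]
        have := mul_le_mul_of_nonneg_left hGM hLy1
        linarith
      have hLypos : 0 < Ly := lt_of_lt_of_le hlpos hlLy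
      have hηl : η ≤ 1/(2 * l) := by
        calc η ≤ 1/(2*Ly) := hηLy
          _ ≤ 1/(2*l) := by
            apply one_div_le_one_div_of_le (by linarith) (by linarith)
      -- the Lipschitz property along the ascent segment
      have hLip : ∀ t ∈ Set.Icc (0:ℝ) 1, ‖gy x (y + t • d) - gy x y‖ ≤ l * t * ‖d‖ := by
        intro t ht
        rcases ht with ⟨ht0, ht1⟩
        have hsegnorm : ‖y - (y + t • d)‖ = t * ‖d‖ := by
          have hh : y - (y + t • d) = -(t • d) := by abel
          rw [hh, norm_neg, norm_smul, Real.norm_eq_abs, abs_of_nonneg ht0]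
        by_cases hLy1' : 0 < Ly1
        · have hsqrt : Real.sqrt (‖x - x‖^2 + ‖y - (y + t • d)‖^2) = t * ‖d‖ := by
            rw [sub_self, norm_zero, hsegnorm]
            have h0 : (0:ℝ)^2 + (t * ‖d‖)^2 = (t * ‖d‖)^2 := by ring
            rw [h0, Real.sqrt_sq (by positivity)]
          have hdle : ‖d‖ ≤ 1/Ly1 := by
            rw [hnd]
            rw [inv_mul_eq_div, div_le_div_iff₀ hlpos hLy1']
            have := hl.le
            have := hl.ge
            nlinarith [hLy0]
          have hcond : Real.sqrt (‖x - x‖^2 + ‖y - (y + t • d)‖^2) ≤ 1/Lx1 + 1/Ly1 := by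
            rw [hsqrt]
            have h9 : 0 ≤ 1/Lx1 := by positivity
            have h10 := mul_nonneg (by linarith : (0:ℝ) ≤ 1 - t) (norm_nonneg d)
            nlinarith [hdle]
          have happ := hsy x y x (y + t • d) hcond
          rw [hsqrt] at happ
          rw [norm_sub_rev]
          calc ‖gy x y - gy x (y + t • d)‖ ≤ (Ly0 + Ly1 * ‖gy x y‖) * (t * ‖d‖) := happ
            _ = l * t * ‖d‖ := by rw [hl, hG]; ring
        · have hLy10 : Ly1 = 0 := le_antisymm (not_lt.1 hLy1') hLy1
          by_cases hLx1' : 0 < Lx1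
          · have hglip : ∀ a b : EuclideanSpace ℝ (Fin m), ‖a - b‖ ≤ 1/Lx1 →
                ‖gy x a - gy x b‖ ≤ Ly0 * ‖a - b‖ := by
              intro a b hab
              have hsqrt : Real.sqrt (‖x - x‖^2 + ‖a - b‖^2) = ‖a - b‖ := by
                rw [sub_self, norm_zero]
                have h0 : (0:ℝ)^2 + ‖a - b‖^2 = ‖a - b‖^2 := by ring
                rw [h0, Real.sqrt_sq (norm_nonneg _)]
              have hcond : Real.sqrt (‖x - x‖^2 + ‖a - b‖^2) ≤ 1/Lx1 + 1/Ly1 := by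
                rw [hsqrt, hLy10]
                simp only [div_zero]
                linarith
              have happ := hsy x a x b hcond
              rw [hsqrt, hLy10] at happ
              simpa using happ
            have hchain := chaining (gy x) (1/Lx1) Ly0 (by positivity) hLy0 hglip
            have := hchain (y + t • d) y
            have hseg2 : ‖(y + t • d) - y‖ = t * ‖d‖ := by
              rw [norm_sub_rev, hsegnorm]
            rw [hseg2] at this
            calc ‖gy x (y + t • d) - gy x y‖ ≤ Ly0 * (t * ‖d‖) := this
              _ = l * t * ‖d‖ := by rw [hl, hLy10]; ring
          · exfalso
            have hLx10 : Lx1 = 0 := le_antisymm (not_lt.1 hLx1') hLx1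
            have hyys : y = ystar x := by
              have h0 : ‖y - ystar x‖ ≤ 0 := by simpa [hLx10] using hnear
              have h1 := le_antisymm h0 (norm_nonneg _)
              rwa [norm_sub_eq_zero_iff] at h1
            have hGys : HasGradientAt (fun y' => L x y') G (ystar x) := by
              rw [hG, ← hyys]; exact hgy x y
            have hopt := max_grad_le hYconv (hmem x) (fun z hz => hmax x z hz) hGys hyY'
            have hdiff : (y + d) - ystar x = d := by
              rw [← hyys]; abel
            rw [hdiff, hd, real_inner_smul_right, real_inner_self_eq_norm_sq] at hopt
            nlinarith [mul_pos (inv_pos.2 hlpos) (pow_pos hGpos 2)]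
      have hasc := ascent_lemma (L x) (gy x) (hgy x) y d l hl0 hLip
      rw [← hG] at hasc
      have hfyd : L x (y + d) ≤ L x (ystar x) := hmax x _ hyY'
      have hGd : ⟪G, d⟫ = l⁻¹ * ‖G‖^2 := by
        rw [hd, real_inner_smul_right, real_inner_self_eq_norm_sq]
      rw [hGd, hnd] at hasc
      have h2 : 1/(2*l) * ‖G‖^2 = l⁻¹ * ‖G‖^2 - l/2 * (l⁻¹ * ‖G‖)^2 := by
        field_simp
        ring
      have h1 : η * ‖G‖^2 ≤ 1/(2*l) * ‖G‖^2 := by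
        apply mul_le_mul_of_nonneg_right hηl (by positivity)
      linarith [hasc, hfyd, h1]
  -- projection step
  set p := y + η • g with hp
  clear_value p
  set q := projY p with hq
  clear_value q
  have hobt : ⟪p - q, ystar x - q⟫ ≤ 0 := by
    rw [hq]
    exact proj_obtuse hYconv projY hproj p (hmem x)
  have hexp1 : ‖p - ystar x‖^2 = ‖p - q‖^2 - 2*⟪p - q, ystar x - q⟫ + ‖ystar x - q‖^2 := by
    have hdc : p - ystar x = (p - q) - (ystar x - q) := by abel
    rw [hdc, norm_sub_sq_real]
  have F1 : ‖ystar x - q‖^2 ≤ ‖p - ystar x‖^2 - ‖p - q‖^2 := by linarith [hobt, hexp1]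
  have F2a : ‖p - ystar x‖^2
      = ‖y - ystar x‖^2 + 2*(η*⟪g, y - ystar x⟫) + η^2*‖g‖^2 := by
    have hdc : p - ystar x = (y - ystar x) + η • g := by rw [hp]; abel
    rw [hdc, norm_add_sq_real, real_inner_smul_right, norm_smul, Real.norm_eq_abs,
      mul_pow, sq_abs, real_inner_comm]
  have F2b : ‖p - q‖^2 = ‖y - q‖^2 + 2*(η*⟪g, y - q⟫) + η^2*‖g‖^2 := by
    have hdc : p - q = (y - q) + η • g := by rw [hp]; abel
    rw [hdc, norm_add_sq_real, real_inner_smul_right, norm_smul, Real.norm_eq_abs,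
      mul_pow, sq_abs, real_inner_comm]
  have Feq : ⟪g, y - ystar x⟫ - ⟪g, y - q⟫
      = ⟪G, y - ystar x⟫ + ⟪G, q - y⟫ + ⟪g - G, q - y⟫ + ⟪g - G, y - ystar x⟫ := by
    simp only [inner_sub_left, inner_sub_right]
    ring
  have F4 : ⟪G, y - ystar x⟫ ≤ L x y - L x (ystar x) - μ/2*‖ystar x - y‖^2 := by
    have hflip : ⟪G, y - ystar x⟫ = -⟪G, ystar x - y⟫ := by
      simp only [inner_sub_right]; ring
    linarith [hI5, hflip.le, hflip.ge]
  have hu : (0:ℝ) < 4*η := by linarith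
  have hdm : ‖q - y‖^2/(4*η)*(4*η) = ‖q - y‖^2 := div_mul_cancel₀ _ (ne_of_gt hu)
  have hAM1 : ‖G‖ * ‖q - y‖ ≤ η*‖G‖^2 + ‖q - y‖^2/(4*η) := by
    nlinarith [sq_nonneg (2*η*‖G‖ - ‖q - y‖), hdm, hη]
  have hAM2 : ‖g - G‖ * ‖q - y‖ ≤ η*‖g - G‖^2 + ‖q - y‖^2/(4*η) := by
    nlinarith [sq_nonneg (2*η*‖g - G‖ - ‖q - y‖), hdm, hη]
  have F5 : ⟪G, q - y⟫ ≤ (L x (ystar x) - L x y) + ‖q - y‖^2/(4*η) := by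
    have hcs := real_inner_le_norm G (q - y)
    linarith [hAM1, hkey]
  have F6 : ⟪g - G, q - y⟫ ≤ η*‖g - G‖^2 + ‖q - y‖^2/(4*η) := by
    have hcs := real_inner_le_norm (g - G) (q - y)
    linarith [hAM2]
  have F7 : ⟪g - G, y - ystar x⟫ = -⟪g - G, ystar x - y⟫ := by
    simp only [inner_sub_left, inner_sub_right]; ring
  have FS : ⟪g, y - ystar x⟫ - ⟪g, y - q⟫
      ≤ -(μ/2)*‖ystar x - y‖^2 + 2*(‖q - y‖^2/(4*η)) + η*‖g - G‖^2
        - ⟪g - G, ystar x - y⟫ := by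
    rw [Feq]
    linarith [F4, F5, F6, F7.le, F7.ge]
  have FSmul := mul_le_mul_of_nonneg_left FS (by linarith : (0:ℝ) ≤ 2*η)
  have hrev1 : ‖y - ystar x‖^2 = ‖ystar x - y‖^2 := by rw [norm_sub_rev]
  have hrev2 : ‖y - q‖^2 = ‖q - y‖^2 := by rw [norm_sub_rev]
  linarith [F1, F2a.le, F2a.ge, F2b.le, F2b.ge, FSmul, hrev1.le, hrev1.ge,
    hrev2.le, hrev2.ge, hdm.le, hdm.ge]
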